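/- arXiv:0907.2165 — 2 statements merged into one kernel-verified Lean document; each statement's English description precedes it below -/
import Mathlib

section
/- Let D be a directed graph whose vertices are linearly ordered, and let P = {V_1,...,V_l} be a partition of the vertex set into intervals of the ordering. Let A_B be the arcs with endpoints in different intervals and A_I the arcs with both endpoints in the same interval. Suppose every backward arc f = vu of D[A_B] admits a certificate: a directed path from u to v using only forward arcs of A_B within the span of f, and these certificates are pairwise arc-disjoint. Then fas(D) = fas(D[A_I]) + fas(D[A_B]). -/
/-- A tournament: irreflexive, and exactly one arc between every pair of distinct vertices. -/
def IsTournament {V : Type*} (r : V → V → Prop) : Prop :=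
  (∀ v, ¬ r v v) ∧ ∀ u v : V, u ≠ v → (r u v ↔ ¬ r v u)

/-- A digraph (given by its arc relation) is acyclic: no directed cycle. -/
def Acyclic {V : Type*} (r : V → V → Prop) : Prop :=
  ∀ v, ¬ Relation.TransGen r v v

/-- The minimum size of a feedback arc set of the digraph given by relation `r`. -/
noncomputable def fas {V : Type*} (r : V → V → Prop) : ℕ :=
  sInf {n : ℕ | ∃ F : Finset (V × V), F.card = n ∧
    Acyclic (fun a b => r a b ∧ (a, b) ∉ F)}

/-!
Removing the backward arcs of `D[A_B]` together with a minimum feedback arc set of `D[A_I]`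
makes `D` acyclic: the interval index never decreases along the remaining arcs, so a cycle
stays inside one interval. Conversely, each backward arc `f` of `D[A_B]` closes a cycle with
its certificate, and these cycles are pairwise arc-disjoint and consist of arcs of `A_B`; so
every feedback arc set of `D` (or of `D[A_B]`) contains at least as many arcs of `A_B` as there
are backward arcs of `D[A_B]`, and the number of those is exactly `fas(D[A_B])`.
-/

open Relation Finset

section General

variable {V : Type*}

theorem Acyclic.mono {r s : V → V → Prop} (h : r ≤ s) (hs : Acyclic s) : Acyclic r :=
  fun v hv => hs v (TransGen.mono h _ _ hv)

theorem acyclic_of_forall_lt [Preorder V] {r : V → V → Prop} (h : ∀ a b, r a b → a < b) :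
    Acyclic r := fun v hv => by
  have hlt : TransGen (· < ·) v v := TransGen.mono h v v hv
  exact lt_irrefl v (by rwa [transGen_eq_self] at hlt)

theorem Relation.TransGen.le_of_monotone {ι : Type*} [Preorder ι] {r : V → V → Prop} {φ : V → ι}
    (hφ : ∀ a b, r a b → φ a ≤ φ b) {v w : V} (h : TransGen r v w) : φ v ≤ φ w := by
  have hle : TransGen (· ≤ ·) (φ v) (φ w) := TransGen.lift φ hφ v w h
  rwa [transGen_eq_self] at hle

theorem Relation.TransGen.of_monotone_of_le {ι : Type*} [PartialOrder ι] {r : V → V → Prop}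
    {φ : V → ι} (hφ : ∀ a b, r a b → φ a ≤ φ b) {v w : V} (h : TransGen r v w)
    (hwv : φ w ≤ φ v) : TransGen (fun a b => r a b ∧ φ a = φ b) v w := by
  induction h with
  | single hvw => exact .single ⟨hvw, le_antisymm (hφ _ _ hvw) hwv⟩
  | @tail a w hva haw ih =>
    have hva' : φ v ≤ φ a := hva.le_of_monotone hφ
    have haw' : φ a ≤ φ w := hφ _ _ haw
    exact (ih (haw'.trans hwv)).tail ⟨haw, le_antisymm haw' (hwv.trans hva')⟩

/-- A cycle along which `φ` never decreases lies in a single fibre of `φ`. -/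
theorem acyclic_of_monotone_of_acyclic_fibers {ι : Type*} [PartialOrder ι] {r : V → V → Prop}
    {φ : V → ι} (hφ : ∀ a b, r a b → φ a ≤ φ b)
    (hfib : Acyclic fun a b => r a b ∧ φ a = φ b) : Acyclic r :=
  fun v hv => hfib v (hv.of_monotone_of_le hφ le_rfl)

theorem fas_le_card (r : V → V → Prop) (F : Finset (V × V))
    (h : Acyclic fun a b => r a b ∧ (a, b) ∉ F) : fas r ≤ #F :=
  Nat.sInf_le ⟨F, rfl, h⟩

theorem exists_card_eq_fas [Fintype V] (r : V → V → Prop) :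
    ∃ F : Finset (V × V), #F = fas r ∧ Acyclic fun a b => r a b ∧ (a, b) ∉ F := by
  have hne : {m : ℕ | ∃ F : Finset (V × V), #F = m ∧
      Acyclic fun a b => r a b ∧ (a, b) ∉ F}.Nonempty := by
    refine ⟨#(univ : Finset (V × V)), univ, rfl, fun v hv => ?_⟩
    cases hv with
    | single h => exact h.2 (mem_univ _)
    | tail _ h => exact h.2 (mem_univ _)
  exact Nat.sInf_mem hne

/-- `insert (v, u) P` is the arc set of the cycle that `(v, u)` closes. -/
theorem exists_mem_insert_of_acyclic {r : V → V → Prop} {F : Finset (V × V)}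
    (hF : Acyclic fun a b => r a b ∧ (a, b) ∉ F) {P : Set (V × V)} (hP : ∀ e ∈ P, r e.1 e.2)
    {u v : V} (hpath : ReflTransGen (fun x y => (x, y) ∈ P) u v) (hvu : r v u) :
    ∃ e ∈ F, e ∈ insert (v, u) P := by
  by_contra! hmiss
  have hpath' : ReflTransGen (fun a b => r a b ∧ (a, b) ∉ F) u v :=
    ReflTransGen.mono (fun a b hab => ⟨hP _ hab, fun hmem => hmiss _ hmem
      (Set.mem_insert_of_mem _ hab)⟩) u v hpath
  exact hF u (TransGen.tail' hpath' ⟨hvu, fun hmem => hmiss _ hmem (Set.mem_insert _ _)⟩)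

theorem card_le_card_filter_of_forall_exists_mem {β γ : Type*} {B : Finset β} {S : β → Set γ}
    {F : Finset γ} {p : γ → Prop} [DecidablePred p] (hdisj : (B : Set β).PairwiseDisjoint S)
    (hp : ∀ f ∈ B, ∀ e ∈ S f, p e) (hhit : ∀ f ∈ B, ∃ e ∈ F, e ∈ S f) :
    #B ≤ #(F.filter p) := by
  refine card_le_card_of_forall_subsingleton (fun f e => e ∈ S f) (fun f hf => ?_) ?_
  · obtain ⟨e, heF, heS⟩ := hhit f hf
    exact ⟨e, mem_filter.2 ⟨heF, hp f hf e heS⟩, heS⟩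
  · exact fun e _ f ⟨hf, hef⟩ g ⟨hg, heg⟩ => hdisj.elim_set hf hg e hef heg

end General

section SafePartition

variable {V ι : Type*} [LinearOrder V] [Fintype V] (r : V → V → Prop) (part : V → ι)

open Classical in
/-- The backward arcs of `D[A_B]`. -/
noncomputable def backwardCrossArcs : Finset (V × V) :=
  univ.filter fun f => r f.1 f.2 ∧ part f.1 ≠ part f.2 ∧ f.2 < f.1

variable {r part}

theorem mem_backwardCrossArcs {f : V × V} :
    f ∈ backwardCrossArcs r part ↔ r f.1 f.2 ∧ part f.1 ≠ part f.2 ∧ f.2 < f.1 := by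
  classical
  simp [backwardCrossArcs]

theorem lt_of_not_mem_backwardCrossArcs {a b : V} (hr : r a b) (hne : part a ≠ part b)
    (hB : (a, b) ∉ backwardCrossArcs r part) : a < b := by
  refine lt_of_le_of_ne (le_of_not_gt fun hba => hB ?_) fun hab => hne (hab ▸ rfl)
  exact mem_backwardCrossArcs.2 ⟨hr, hne, hba⟩

theorem fas_cross_le_card :
    fas (fun a b => r a b ∧ part a ≠ part b) ≤ #(backwardCrossArcs r part) :=
  fas_le_card _ _ <| acyclic_of_forall_lt fun _ _ ⟨⟨hr, hne⟩, hB⟩ =>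
    lt_of_not_mem_backwardCrossArcs hr hne hB

theorem fas_le_fas_inner_add_card [PartialOrder ι] (hmono : Monotone part) :
    fas r ≤ fas (fun a b => r a b ∧ part a = part b) + #(backwardCrossArcs r part) := by
  obtain ⟨FI, hFI, hFIacyc⟩ := exists_card_eq_fas fun a b => r a b ∧ part a = part b
  have hmonotone : ∀ a b, (r a b ∧ (a, b) ∉ FI ∪ backwardCrossArcs r part) → part a ≤ part b := by
    rintro a b ⟨hr, hmem⟩
    by_cases heq : part a = part b
    · exact heq.le
    · exact hmono (lt_of_not_mem_backwardCrossArcs hr heq fun h => hmem (mem_union_right _ h)).le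
  have hacyc : Acyclic fun a b => r a b ∧ (a, b) ∉ FI ∪ backwardCrossArcs r part :=
    acyclic_of_monotone_of_acyclic_fibers hmonotone <| hFIacyc.mono
      fun a b ⟨⟨hr, hmem⟩, heq⟩ => ⟨⟨hr, heq⟩, fun h => hmem (mem_union_left _ h)⟩
  calc fas r ≤ #(FI ∪ backwardCrossArcs r part) := fas_le_card r _ hacyc
    _ ≤ #FI + #(backwardCrossArcs r part) := card_union_le _ _
    _ = _ := by rw [hFI]

/-- Pairwise arc-disjoint certificates for the backward arcs of `D[A_B]`: `C f` is the arc set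
of a path of forward arcs of `A_B` inside the span of `f`, from its head back to its tail. -/
structure Certificates (r : V → V → Prop) (part : V → ι) (C : V × V → Set (V × V)) : Prop where
  subset : ∀ f : V × V, r f.1 f.2 → part f.1 ≠ part f.2 → f.2 < f.1 →
    C f ⊆ {e : V × V | r e.1 e.2 ∧ part e.1 ≠ part e.2 ∧ e.1 < e.2 ∧ f.2 ≤ e.1 ∧ e.2 ≤ f.1}
  path : ∀ f : V × V, r f.1 f.2 → part f.1 ≠ part f.2 → f.2 < f.1 →
    ReflTransGen (fun x y => (x, y) ∈ C f) f.2 f.1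
  disjoint : ∀ f g : V × V, r f.1 f.2 → part f.1 ≠ part f.2 → f.2 < f.1 →
    r g.1 g.2 → part g.1 ≠ part g.2 → g.2 < g.1 → f ≠ g → Disjoint (C f) (C g)

namespace Certificates

variable {C : V × V → Set (V × V)} (hC : Certificates r part C)
include hC

theorem forward_of_mem {f e : V × V} (hf : f ∈ backwardCrossArcs r part) (he : e ∈ C f) :
    r e.1 e.2 ∧ part e.1 ≠ part e.2 ∧ e.1 < e.2 := by
  obtain ⟨hr, hne, hlt⟩ := mem_backwardCrossArcs.1 hf
  obtain ⟨hre, hnee, hlte, -⟩ := hC.subset f hr hne hlt he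
  exact ⟨hre, hnee, hlte⟩

theorem pairwiseDisjoint_insert :
    (backwardCrossArcs r part : Set (V × V)).PairwiseDisjoint fun f => insert f (C f) := by
  intro f hf g hg hfg
  have hfC : ∀ {f g}, f ∈ backwardCrossArcs r part → g ∈ backwardCrossArcs r part → f ∉ C g :=
    fun hf hg hmem => (mem_backwardCrossArcs.1 hf).2.2.asymm (hC.forward_of_mem hg hmem).2.2
  obtain ⟨hr, hne, hlt⟩ := mem_backwardCrossArcs.1 hf
  obtain ⟨hr', hne', hlt'⟩ := mem_backwardCrossArcs.1 hg
  refine Set.disjoint_insert_left.2 ⟨?_, Set.disjoint_insert_right.2 ⟨hfC hg hf, ?_⟩⟩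
  · exact fun hmem => (Set.mem_insert_iff.1 hmem).elim hfg (hfC hf hg)
  · exact hC.disjoint f g hr hne hlt hr' hne' hlt' hfg

theorem card_le_card_filter_of_acyclic [DecidableEq ι] {r' : V → V → Prop}
    (hr' : ∀ a b, r a b → part a ≠ part b → r' a b) {F : Finset (V × V)}
    (hF : Acyclic fun a b => r' a b ∧ (a, b) ∉ F) :
    #(backwardCrossArcs r part) ≤ #(F.filter fun e => part e.1 ≠ part e.2) := by
  refine card_le_card_filter_of_forall_exists_mem hC.pairwiseDisjoint_insert ?_ fun f hf => ?_
  · intro f hf e he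
    rcases Set.mem_insert_iff.1 he with rfl | he
    · exact (mem_backwardCrossArcs.1 hf).2.1
    · exact (hC.forward_of_mem hf he).2.1
  · obtain ⟨hr, hne, hlt⟩ := mem_backwardCrossArcs.1 hf
    refine exists_mem_insert_of_acyclic hF (fun e he => ?_) (hC.path f hr hne hlt) (hr' _ _ hr hne)
    obtain ⟨hre, hnee, -⟩ := hC.forward_of_mem hf he
    exact hr' _ _ hre hnee

theorem card_le_fas_cross [DecidableEq ι] :
    #(backwardCrossArcs r part) ≤ fas (fun a b => r a b ∧ part a ≠ part b) := by
  obtain ⟨F, hF, hFacyc⟩ := exists_card_eq_fas fun a b => r a b ∧ part a ≠ part b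
  calc #(backwardCrossArcs r part) ≤ #(F.filter fun e => part e.1 ≠ part e.2) :=
        hC.card_le_card_filter_of_acyclic (fun a b hr hne => ⟨hr, hne⟩) hFacyc
    _ ≤ #F := card_filter_le _ _
    _ = _ := hF

theorem fas_inner_add_card_le [DecidableEq ι] :
    fas (fun a b => r a b ∧ part a = part b) + #(backwardCrossArcs r part) ≤ fas r := by
  obtain ⟨F, hF, hFacyc⟩ := exists_card_eq_fas r
  have hinner : fas (fun a b => r a b ∧ part a = part b) ≤
      #(F.filter fun e => part e.1 = part e.2) :=
    fas_le_card _ _ <| hFacyc.mono fun a b ⟨⟨hr, heq⟩, hmem⟩ =>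
      ⟨hr, fun h => hmem (mem_filter.2 ⟨h, heq⟩)⟩
  have hcross := hC.card_le_card_filter_of_acyclic (fun a b hr _ => hr) hFacyc
  have hsplit : #(F.filter fun e => part e.1 = part e.2) +
      #(F.filter fun e => part e.1 ≠ part e.2) = #F :=
    card_filter_add_card_filter_not _
  omega

end Certificates

end SafePartition

/-- Vertices are ordered as `Fin n`; the intervals of the partition are the fibres of the
monotone map `part`. -/
theorem stmt6 (n : ℕ) (r : Fin n → Fin n → Prop) (part : Fin n → ℕ)
    (hmono : Monotone part)
    (C : Fin n × Fin n → Set (Fin n × Fin n))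
    (hsub : ∀ f : Fin n × Fin n, r f.1 f.2 → part f.1 ≠ part f.2 → f.2 < f.1 →
      C f ⊆ {e : Fin n × Fin n |
        r e.1 e.2 ∧ part e.1 ≠ part e.2 ∧ e.1 < e.2 ∧ f.2 ≤ e.1 ∧ e.2 ≤ f.1})
    (hpath : ∀ f : Fin n × Fin n, r f.1 f.2 → part f.1 ≠ part f.2 → f.2 < f.1 →
      Relation.ReflTransGen (fun x y => (x, y) ∈ C f) f.2 f.1)
    (hdisj : ∀ f g : Fin n × Fin n, r f.1 f.2 → part f.1 ≠ part f.2 → f.2 < f.1 →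
      r g.1 g.2 → part g.1 ≠ part g.2 → g.2 < g.1 → f ≠ g → Disjoint (C f) (C g)) :
    fas r = fas (fun a b => r a b ∧ part a = part b) +
            fas (fun a b => r a b ∧ part a ≠ part b) := by
  have hC : Certificates r part C := ⟨hsub, hpath, hdisj⟩
  have hcross := le_antisymm fas_cross_le_card hC.card_le_fas_cross
  rw [hcross]
  exact le_antisymm (fas_le_fas_inner_add_card hmono) hC.fas_inner_add_card_le
end

section
/- A tournament reduced under the three reduction rules (no vertex outside a triangle, no arc in more than k triangles, no transitive-module reduction applicable) that admits a feedback arc set of size at most k has at most sqrt(4k^3+2k^2-k) + 2k vertices. -/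
/-!
Let `T` be the at most `2k` vertices incident to a feedback arc set `F` with `|F| ≤ k`. A directed
triangle through a vertex outside `T` must use the opposite arc, which therefore lies in `F`.
Hence for an arc `u → u'` outside `T` every in-neighbour of `u` in `T` is one of `u'`: the
in-neighbourhoods in `T` ("profiles") of the vertices outside `T` form a chain, so there are at
most `2k + 1` profile classes. Each class `C` is a transitive module; by rule (3) applied to a
maximal transitive module containing it, `|C|` is at most the number of back arcs, and these are
arcs of `F` forming a triangle with every vertex of `C`. As an arc lies in at most `k` triangles,
double counting gives `∑ |C|² ≤ |F| k ≤ k²`, and Cauchy–Schwarz bounds the number of vertices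
outside `T` by `√((2k + 1) k²) ≤ √(4k³ + 2k² - k)`.
-/

section

open Finset

theorem Finset.card_le_card_add_one_of_isChain {α : Type*} {S : Finset (Finset α)}
    {T : Finset α} (hS : IsChain (· ⊆ ·) (S : Set (Finset α))) (hST : ∀ s ∈ S, s ⊆ T) :
    #S ≤ #T + 1 := by
  have hinj : Set.InjOn card (S : Set (Finset α)) := by
    intro s hs t ht hcard
    rcases hS.total hs ht with hst | hts
    · exact eq_of_subset_of_card_le hst hcard.ge
    · exact (eq_of_subset_of_card_le hts hcard.le).symm
  have hmaps : ∀ s ∈ S, #s ∈ range (#T + 1) := fun s hs =>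
    mem_range.mpr (Nat.lt_succ_of_le (card_le_card (hST s hs)))
  simpa using card_le_card_of_injOn card hmaps hinj

theorem Finset.sq_card_le_card_image_mul_sum_card_fiber {α β : Type*} [DecidableEq β]
    (s : Finset α) (f : α → β) :
    #s ^ 2 ≤ #(s.image f) * ∑ a ∈ s, #{x ∈ s | f x = f a} := by
  have hfiber : ∑ a ∈ s, #{x ∈ s | f x = f a} = ∑ b ∈ s.image f, #{x ∈ s | f x = b} ^ 2 := by
    rw [← sum_fiberwise_of_maps_to (g := f) (t := s.image f) fun a ha => mem_image_of_mem f ha]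
    refine sum_congr rfl fun b _ => ?_
    rw [sum_congr rfl fun a ha => by rw [(mem_filter.mp ha).2], sum_const, smul_eq_mul, sq]
  rw [hfiber, card_eq_sum_card_image f s]
  exact sq_sum_le_card_mul_sum_sq

variable {V : Type*} {r : V → V → Prop}

theorem IsTournament.rel_of_not_rel (hT : IsTournament r) {a b : V} (hab : a ≠ b)
    (h : ¬ r a b) : r b a :=
  not_not.mp fun h' => h ((hT.2 a b hab).mpr h')

def IsModule (r : V → V → Prop) (M : Set V) : Prop :=
  ∀ x ∉ M, (∀ m ∈ M, r x m) ∨ (∀ m ∈ M, r m x)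

def IsTransitiveModule (r : V → V → Prop) (M : Set V) : Prop :=
  IsModule r M ∧ Acyclic (fun a b => r a b ∧ a ∈ M ∧ b ∈ M)

/-- The arcs from the out-neighbourhood `O` of `M` to its in-neighbourhood `I`. -/
def backArcs (r : V → V → Prop) (M : Set V) : Set (V × V) :=
  {e | (e.1 ∉ M ∧ ∀ m ∈ M, r m e.1) ∧ (e.2 ∉ M ∧ ∀ m ∈ M, r e.2 m) ∧ r e.1 e.2}

def IsFeedbackArcSet (r : V → V → Prop) (F : Finset (V × V)) : Prop :=
  Acyclic (fun a b => r a b ∧ (a, b) ∉ F)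

section TriangleArcs

variable [DecidableRel r] {F : Finset (V × V)}

def triangleArcs (r : V → V → Prop) [DecidableRel r] (F : Finset (V × V)) (C : Finset V) :
    Finset (V × V) :=
  {e ∈ F | r e.1 e.2 ∧ ∀ u ∈ C, r e.2 u ∧ r u e.1}

theorem mem_triangleArcs {C : Finset V} {e : V × V} :
    e ∈ triangleArcs r F C ↔ e ∈ F ∧ r e.1 e.2 ∧ ∀ u ∈ C, r e.2 u ∧ r u e.1 :=
  mem_filter

end TriangleArcs

section ArcEnds

variable [DecidableEq V] {F : Finset (V × V)}

def arcEnds (F : Finset (V × V)) : Finset V := F.image Prod.fst ∪ F.image Prod.snd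

theorem card_arcEnds_le : #(arcEnds F) ≤ 2 * #F := by
  have := card_union_le (F.image Prod.fst) (F.image Prod.snd)
  have := card_image_le (s := F) (f := Prod.fst)
  have := card_image_le (s := F) (f := Prod.snd)
  rw [arcEnds]; omega

theorem mk_notMem_of_left_notMem_arcEnds {a b : V} (ha : a ∉ arcEnds F) : (a, b) ∉ F :=
  fun h => ha (mem_union_left _ (mem_image_of_mem Prod.fst h))

theorem mk_notMem_of_right_notMem_arcEnds {a b : V} (hb : b ∉ arcEnds F) : (a, b) ∉ F :=
  fun h => hb (mem_union_right _ (mem_image_of_mem Prod.snd h))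

theorem IsFeedbackArcSet.mem_of_triangle (hF : IsFeedbackArcSet r F) {a b c : V}
    (hc : c ∉ arcEnds F) (hab : r a b) (hbc : r b c) (hca : r c a) : (a, b) ∈ F := by
  by_contra h
  exact hF a (.head ⟨hab, h⟩ (.head ⟨hbc, mk_notMem_of_right_notMem_arcEnds hc⟩
    (.single ⟨hca, mk_notMem_of_left_notMem_arcEnds hc⟩)))

theorem IsFeedbackArcSet.acyclic_of_forall_notMem_arcEnds (hF : IsFeedbackArcSet r F)
    {M : Set V} (hM : ∀ m ∈ M, m ∉ arcEnds F) : Acyclic (fun a b => r a b ∧ a ∈ M ∧ b ∈ M) :=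
  fun v hv => hF v (Relation.TransGen.mono
    (fun _ _ hab => ⟨hab.1, mk_notMem_of_left_notMem_arcEnds (hM _ hab.2.1)⟩) v v hv)

end ArcEnds

section Profile

variable [DecidableEq V] [DecidableRel r] {F : Finset (V × V)}

def profile (r : V → V → Prop) [DecidableRel r] (T : Finset V) (u : V) : Finset V :=
  {w ∈ T | r w u}

theorem profile_subset_of_rel (hT : IsTournament r) (hF : IsFeedbackArcSet r F) {u u' : V}
    (hu : u ∉ arcEnds F) (hu' : u' ∉ arcEnds F) (huu' : r u u') :
    profile r (arcEnds F) u ⊆ profile r (arcEnds F) u' := by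
  intro w hw
  rw [profile, mem_filter] at hw ⊢
  refine ⟨hw.1, ?_⟩
  by_contra hwu'
  have hu'w : r u' w := hT.rel_of_not_rel (fun h => hu' (h ▸ hw.1)) hwu'
  exact mk_notMem_of_left_notMem_arcEnds hu' (hF.mem_of_triangle hu hu'w hw.2 huu')

theorem card_le_card_triangleArcs [Finite V]
    (hmodules : ∀ M, Maximal (IsTransitiveModule r) M → M.ncard ≤ (backArcs r M).ncard)
    (hF : IsFeedbackArcSet r F) {C : Finset V} (hC : IsTransitiveModule r C) {m₀ : V}
    (hm₀ : m₀ ∈ C) (hm₀F : m₀ ∉ arcEnds F) : #C ≤ #(triangleArcs r F C) := by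
  obtain ⟨M, hCM, hM⟩ := Finite.exists_le_maximal hC
  -- a back arc closes a directed triangle with `m₀`, which is not incident to `F`
  have hback : backArcs r M ⊆ triangleArcs r F C := by
    rintro e ⟨⟨-, he₁⟩, ⟨-, he₂⟩, he⟩
    refine mem_triangleArcs.mpr ⟨?_, he, fun u hu => ⟨he₂ u (hCM hu), he₁ u (hCM hu)⟩⟩
    exact hF.mem_of_triangle hm₀F he (he₂ m₀ (hCM hm₀)) (he₁ m₀ (hCM hm₀))
  calc #C = (C : Set V).ncard := (Set.ncard_coe_finset C).symm
    _ ≤ M.ncard := Set.ncard_le_ncard hCM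
    _ ≤ (backArcs r M).ncard := hmodules M hM
    _ ≤ (triangleArcs r F C : Set (V × V)).ncard := Set.ncard_le_ncard hback
    _ = #(triangleArcs r F C) := Set.ncard_coe_finset _

variable [Fintype V]

theorem card_image_profile_le (hT : IsTournament r) (hF : IsFeedbackArcSet r F) :
    #((arcEnds F)ᶜ.image (profile r (arcEnds F))) ≤ #(arcEnds F) + 1 := by
  refine card_le_card_add_one_of_isChain ?_ fun s hs => ?_
  · simp only [coe_image, coe_compl]
    rintro _ ⟨u, hu, rfl⟩ _ ⟨u', hu', rfl⟩ -
    rcases eq_or_ne u u' with rfl | hne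
    · exact Or.inl subset_rfl
    by_cases huu' : r u u'
    · exact Or.inl (profile_subset_of_rel hT hF hu hu' huu')
    · exact Or.inr (profile_subset_of_rel hT hF hu' hu (hT.rel_of_not_rel hne huu'))
  · obtain ⟨u, -, rfl⟩ := mem_image.mp hs
    exact filter_subset _ _

def profileClass (r : V → V → Prop) [DecidableRel r] (F : Finset (V × V)) (u : V) :
    Finset V :=
  {x ∈ (arcEnds F)ᶜ | profile r (arcEnds F) x = profile r (arcEnds F) u}

theorem notMem_arcEnds_of_mem_profileClass {u x : V} (hx : x ∈ profileClass r F u) :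
    x ∉ arcEnds F :=
  mem_compl.mp (mem_filter.mp hx).1

theorem mem_profileClass_self {u : V} (hu : u ∉ arcEnds F) : u ∈ profileClass r F u :=
  mem_filter.mpr ⟨mem_compl.mpr hu, rfl⟩

theorem isModule_profileClass (hT : IsTournament r) (hF : IsFeedbackArcSet r F) (u : V) :
    IsModule r (profileClass r F u : Set V) := by
  intro x hx
  by_contra hmixed
  simp only [mem_coe, not_or, not_forall] at hx hmixed
  obtain ⟨⟨a, ha, hxa⟩, ⟨b, hb, hbx⟩⟩ := hmixed
  have hax : r a x := hT.rel_of_not_rel (fun h => hx (h ▸ ha)) hxa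
  have hxb : r x b := hT.rel_of_not_rel (fun h => hx (h ▸ hb)) hbx
  have hab : profile r (arcEnds F) a = profile r (arcEnds F) b :=
    (mem_filter.mp ha).2.trans (mem_filter.mp hb).2.symm
  by_cases hxF : x ∈ arcEnds F
  · have hxb' : x ∈ profile r (arcEnds F) b := mem_filter.mpr ⟨hxF, hxb⟩
    have hxa' : x ∈ profile r (arcEnds F) a := hab ▸ hxb'
    exact hxa (mem_filter.mp hxa').2
  · have ha' := notMem_arcEnds_of_mem_profileClass ha
    have hb' := notMem_arcEnds_of_mem_profileClass hb
    refine hx (mem_filter.mpr ⟨mem_compl.mpr hxF, ?_⟩)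
    refine (subset_antisymm ?_ ?_).trans (mem_filter.mp hb).2
    · exact profile_subset_of_rel hT hF hxF hb' hxb
    · exact hab ▸ profile_subset_of_rel hT hF ha' hxF hax

theorem isTransitiveModule_profileClass (hT : IsTournament r) (hF : IsFeedbackArcSet r F)
    (u : V) : IsTransitiveModule r (profileClass r F u : Set V) :=
  ⟨isModule_profileClass hT hF u,
    hF.acyclic_of_forall_notMem_arcEnds fun _ hx => notMem_arcEnds_of_mem_profileClass hx⟩

theorem sum_card_profileClass_le {k : ℕ}
    (htriangles : ∀ u v : V, r u v → {w : V | r v w ∧ r w u}.ncard ≤ k)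
    (hmodules : ∀ M, Maximal (IsTransitiveModule r) M → M.ncard ≤ (backArcs r M).ncard)
    (hT : IsTournament r) (hF : IsFeedbackArcSet r F) :
    ∑ u ∈ (arcEnds F)ᶜ, #(profileClass r F u) ≤ #F * k := by
  let R : V → V × V → Prop := fun u e => e ∈ triangleArcs r F (profileClass r F u)
  have hclass : ∀ u ∈ (arcEnds F)ᶜ, #(profileClass r F u) ≤ #(F.bipartiteAbove R u) := by
    intro u hu
    have hu' := mem_compl.mp hu
    rw [bipartiteAbove, filter_mem_eq_inter,
      inter_eq_right.mpr fun e he => (mem_triangleArcs.mp he).1]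
    exact card_le_card_triangleArcs hmodules hF (isTransitiveModule_profileClass hT hF u)
      (mem_profileClass_self hu') hu'
  have harc : ∀ e ∈ F, #((arcEnds F)ᶜ.bipartiteBelow R e) ≤ k := by
    intro e _
    by_cases he : r e.1 e.2
    · calc #((arcEnds F)ᶜ.bipartiteBelow R e) ≤ #{w | r e.2 w ∧ r w e.1} := by
            refine card_le_card fun u hu => ?_
            obtain ⟨hu, hRu⟩ := (mem_bipartiteBelow R).mp hu
            simpa using (mem_triangleArcs.mp hRu).2.2 u (mem_profileClass_self (mem_compl.mp hu))
        _ ≤ k := by simpa [← Set.ncard_coe_finset] using htriangles _ _ he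
    · simp [bipartiteBelow, R, triangleArcs, he]
  calc ∑ u ∈ (arcEnds F)ᶜ, #(profileClass r F u)
      ≤ ∑ u ∈ (arcEnds F)ᶜ, #(F.bipartiteAbove R u) := sum_le_sum hclass
    _ = ∑ e ∈ F, #((arcEnds F)ᶜ.bipartiteBelow R e) :=
        sum_card_bipartiteAbove_eq_sum_card_bipartiteBelow R
    _ ≤ #F * k := by simpa using sum_le_sum harc

end Profile

theorem natCast_le_sqrt_of_sq_le {n k : ℕ} (h : n ^ 2 ≤ (2 * k + 1) * (k * k)) :
    (n : ℝ) ≤ √(4 * (k : ℝ) ^ 3 + 2 * (k : ℝ) ^ 2 - k) := by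
  have hk : (k : ℝ) ≤ k * k := by exact_mod_cast Nat.le_mul_self k
  have hn : (n : ℝ) ^ 2 ≤ (2 * k + 1) * (k * k) := by exact_mod_cast h
  exact Real.le_sqrt_of_sq_le (by nlinarith [pow_nonneg (Nat.cast_nonneg k : (0 : ℝ) ≤ k) 3])

end

theorem stmt11_general {V : Type*} [Fintype V] (r : V → V → Prop) (hT : IsTournament r) (k : ℕ)
    (h2 : ∀ u v : V, r u v → {w : V | r v w ∧ r w u}.ncard ≤ k)
    (h3 : ∀ M : Set V,
      (∀ x ∉ M, (∀ m ∈ M, r x m) ∨ (∀ m ∈ M, r m x)) →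
      Acyclic (fun a b => r a b ∧ a ∈ M ∧ b ∈ M) →
      (∀ M' : Set V, M ⊆ M' →
        (∀ x ∉ M', (∀ m ∈ M', r x m) ∨ (∀ m ∈ M', r m x)) →
        Acyclic (fun a b => r a b ∧ a ∈ M' ∧ b ∈ M') → M' = M) →
      M.ncard ≤ {e : V × V | (e.1 ∉ M ∧ ∀ m ∈ M, r m e.1) ∧
                             (e.2 ∉ M ∧ ∀ m ∈ M, r e.2 m) ∧ r e.1 e.2}.ncard)
    (hfas : ∃ F : Finset (V × V), F.card ≤ k ∧
      Acyclic (fun a b => r a b ∧ (a, b) ∉ F)) :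
    (Fintype.card V : ℝ) ≤
      Real.sqrt (4 * (k : ℝ) ^ 3 + 2 * (k : ℝ) ^ 2 - k) + 2 * k := by
  classical
  obtain ⟨F, hFk, hF⟩ := hfas
  have hmax : ∀ M, Maximal (IsTransitiveModule r) M → M.ncard ≤ (backArcs r M).ncard :=
    fun M hM => h3 M hM.prop.1 hM.prop.2 fun M' hMM' hmod hacy =>
      hM.eq_of_superset ⟨hmod, hacy⟩ hMM'
  have hends := card_arcEnds_le (F := F)
  have hclasses : ((arcEnds F)ᶜ.image (profile r (arcEnds F))).card ≤ 2 * k + 1 :=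
    (card_image_profile_le hT hF).trans (by omega)
  have hpairs : ∑ u ∈ (arcEnds F)ᶜ, (profileClass r F u).card ≤ k * k :=
    (sum_card_profileClass_le h2 hmax hT hF).trans (Nat.mul_le_mul_right k hFk)
  have hfree : (arcEnds F)ᶜ.card ^ 2 ≤ (2 * k + 1) * (k * k) :=
    (Finset.sq_card_le_card_image_mul_sum_card_fiber _ _).trans (Nat.mul_le_mul hclasses hpairs)
  have hV : Fintype.card V ≤ (arcEnds F)ᶜ.card + 2 * k := by
    rw [← Finset.card_compl_add_card (arcEnds F)]; omega
  calc (Fintype.card V : ℝ) ≤ (arcEnds F)ᶜ.card + 2 * k := by exact_mod_cast hV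
    _ ≤ _ := by gcongr; exact natCast_le_sqrt_of_sq_le hfree

/-- A tournament reduced under the three reduction rules that has a feedback arc set of
size at most `k` has at most `√(4k³+2k²-k) + 2k` vertices. -/
theorem stmt11 {V : Type*} [Fintype V] (r : V → V → Prop) (hT : IsTournament r) (k : ℕ)
    (h1 : ∀ v : V, ∃ a b : V, r v a ∧ r a b ∧ r b v)
    (h2 : ∀ u v : V, r u v → {w : V | r v w ∧ r w u}.ncard ≤ k)
    (h3 : ∀ M : Set V,
      (∀ x ∉ M, (∀ m ∈ M, r x m) ∨ (∀ m ∈ M, r m x)) →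
      Acyclic (fun a b => r a b ∧ a ∈ M ∧ b ∈ M) →
      (∀ M' : Set V, M ⊆ M' →
        (∀ x ∉ M', (∀ m ∈ M', r x m) ∨ (∀ m ∈ M', r m x)) →
        Acyclic (fun a b => r a b ∧ a ∈ M' ∧ b ∈ M') → M' = M) →
      M.ncard ≤ {e : V × V | (e.1 ∉ M ∧ ∀ m ∈ M, r m e.1) ∧
                             (e.2 ∉ M ∧ ∀ m ∈ M, r e.2 m) ∧ r e.1 e.2}.ncard)
    (hfas : ∃ F : Finset (V × V), F.card ≤ k ∧
      Acyclic (fun a b => r a b ∧ (a, b) ∉ F)) :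
    (Fintype.card V : ℝ) ≤
      Real.sqrt (4 * (k : ℝ) ^ 3 + 2 * (k : ℝ) ^ 2 - k) + 2 * k :=
  stmt11_general r hT k h2 h3 hfas
end
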